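/- arXiv:1601.05842 — 5 statements merged into one kernel-verified Lean document; each statement's English description precedes it below -/
import Mathlib

section
/- Define Γ(u,k) = 1 + (1-b)^{-u}[(-b)^{m-k}·C(u-1, m-k) - Σ_{j=0}^{m-k} C(u,j)(-b)^j] for integers b ≥ 2, m ≥ 0, 0 ≤ k ≤ m and u ≥ 1. If b ≥ u and u = m - k + 2L - 1 for some positive integer L, then Γ(u,k) ≥ 1. -/
/-!
Writing `u = n + 1` and `d = m - k`, Pascal's rule splits `∑_{j ≤ d} C(n+1, j) x^j` as
`(1 + x) ∑_{j < d} C(n, j) x^j + C(n, d) x^d`; at `x = -b` the last term cancels the correction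
term of `Γ`, and the factor `1 - b` cancels one power of `(1 - b)^{-u}`. Since `n ≡ d (mod 2)`,
`Γ - 1` becomes `(b - 1)^{-n}` times the alternating sum `∑_{j < d} ± C(n, j) b^j` ending in a `+`
sign. Its terms increase (this is where `b ≥ u` enters), so that sum is nonnegative.
-/

open Finset

/-- Gain coefficient of a scrambled `(0,m,s)`-net in base `b`. -/
noncomputable def gainCoeff (b m k u : ℕ) : ℝ :=
  1 + ((1 : ℝ) - b) ^ (-(u : ℤ)) *
    ((-(b : ℝ)) ^ (m - k) * ((u - 1).choose (m - k) : ℝ)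
      - ∑ j ∈ range (m - k + 1), ((u.choose j : ℝ) * (-(b : ℝ)) ^ j))

theorem Nat.choose_mul_pow_le_choose_succ_mul_pow {n i b : ℕ} (hi : i < n) (hb : i + 1 ≤ b) :
    n.choose i * b ^ i ≤ n.choose (i + 1) * b ^ (i + 1) := by
  have hpascal : n.choose i ≤ n.choose (i + 1) * (i + 1) := by
    rw [Nat.choose_succ_right_eq]
    exact Nat.le_mul_of_pos_right _ (Nat.sub_pos_of_lt hi)
  calc n.choose i * b ^ i ≤ n.choose (i + 1) * (i + 1) * b ^ i := by gcongr
    _ ≤ n.choose (i + 1) * b * b ^ i := by gcongr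
    _ = n.choose (i + 1) * b ^ (i + 1) := by ring

theorem sum_range_succ_choose_succ_mul_pow {R : Type*} [CommSemiring R] (n d : ℕ) (x : R) :
    ∑ j ∈ range (d + 1), ((n + 1).choose j : R) * x ^ j =
      (1 + x) * ∑ j ∈ range d, (n.choose j : R) * x ^ j + n.choose d * x ^ d := by
  induction d with
  | zero => simp
  | succ d ih =>
    rw [sum_range_succ, ih, sum_range_succ, Nat.choose_succ_succ']
    push_cast
    ring

theorem alternating_sum_range_succ_nonneg_and_le {R : Type*} [Ring R] [PartialOrder R]
    [IsOrderedRing R] (f : ℕ → R) (hf₀ : 0 ≤ f 0) :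
    ∀ n, (∀ i < n, f i ≤ f (i + 1)) →
      0 ≤ ∑ j ∈ range (n + 1), (-1) ^ (n + j) * f j ∧
        ∑ j ∈ range (n + 1), (-1) ^ (n + j) * f j ≤ f n
  | 0, _ => by simpa using hf₀
  | n + 1, hf => by
    obtain ⟨ih₀, ih₁⟩ := alternating_sum_range_succ_nonneg_and_le f hf₀ n
      fun i hi => hf i (by omega)
    have hrec : ∑ j ∈ range (n + 2), (-1 : R) ^ (n + 1 + j) * f j =
        f (n + 1) - ∑ j ∈ range (n + 1), (-1) ^ (n + j) * f j := by
      rw [sum_range_succ, (Even.add_self (n + 1)).neg_one_pow, one_mul, sub_eq_neg_add,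
        ← sum_neg_distrib]
      congr 1
      refine sum_congr rfl fun j _ => ?_
      rw [add_right_comm, pow_succ]
      noncomm_ring
    rw [hrec]
    exact ⟨sub_nonneg.2 (ih₁.trans (hf n n.lt_succ_self)), sub_le_self _ ih₀⟩

theorem gainCoeff_succ {b : ℕ} (hb : b ≠ 1) (m k n : ℕ) :
    gainCoeff b m k (n + 1) =
      1 - (((1 : ℝ) - b) ^ n)⁻¹ * ∑ j ∈ range (m - k), (n.choose j : ℝ) * (-(b : ℝ)) ^ j := by
  have hb' : (1 : ℝ) - b ≠ 0 := sub_ne_zero.2 (by exact_mod_cast hb.symm)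
  rw [gainCoeff, Nat.add_sub_cancel, sum_range_succ_choose_succ_mul_pow, zpow_neg,
    zpow_natCast, pow_succ]
  field_simp
  ring

theorem gainCoeff_succ_of_even {b m k n e : ℕ} (hb : b ≠ 1) (hd : m - k = e + 1)
    (hn : Even (n + e + 1)) :
    gainCoeff b m k (n + 1) = 1 + (((b : ℝ) - 1) ^ n)⁻¹ *
      ∑ j ∈ range (e + 1), (-1) ^ (e + j) * ((n.choose j * b ^ j : ℕ) : ℝ) := by
  have hsign : ∀ j, (-1 : ℝ) ^ n * (-1) ^ j = -(-1) ^ (e + j) := by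
    intro j
    rw [← pow_add, neg_one_pow_congr (n := e + j + 1) (by grind), pow_succ, mul_neg_one]
  have hinv : (((1 : ℝ) - b) ^ n)⁻¹ = (((b : ℝ) - 1) ^ n)⁻¹ * (-1) ^ n := by
    rw [show (1 : ℝ) - b = -1 * (b - 1) by ring, mul_pow, mul_inv, ← inv_pow, inv_neg_one,
      mul_comm]
  rw [gainCoeff_succ hb, hd, sub_eq_add_neg, hinv, mul_assoc, ← mul_neg, mul_sum,
    ← sum_neg_distrib]
  congr 2
  refine sum_congr rfl fun j _ => ?_
  rw [neg_pow (b : ℝ)]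
  push_cast
  linear_combination (-(n.choose j * (b : ℝ) ^ j)) * hsign j

theorem gainCoeff_ge_one_of_odd_gap_general
    (b m k u L : ℕ) (hb2 : 2 ≤ b) (hbu : u ≤ b) (hu : 1 ≤ u)
    (hL : 1 ≤ L) (huL : (u : ℤ) = (m : ℤ) - k + 2 * L - 1) :
    1 ≤ gainCoeff b m k u := by
  obtain ⟨n, rfl⟩ : ∃ n, u = n + 1 := ⟨u - 1, by omega⟩
  rcases hd : m - k with _ | e
  · simp [gainCoeff_succ (by omega : b ≠ 1), hd]
  rw [gainCoeff_succ_of_even (by omega) hd ⟨e + L, by omega⟩]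
  have hmono : ∀ i < e,
      ((n.choose i * b ^ i : ℕ) : ℝ) ≤ ((n.choose (i + 1) * b ^ (i + 1) : ℕ) : ℝ) :=
    fun i hi => by exact_mod_cast Nat.choose_mul_pow_le_choose_succ_mul_pow (by omega) (by omega)
  have halt := (alternating_sum_range_succ_nonneg_and_le
    (fun j => ((n.choose j * b ^ j : ℕ) : ℝ)) (Nat.cast_nonneg _) e hmono).1
  have hb : (0 : ℝ) ≤ b - 1 := sub_nonneg.2 (by exact_mod_cast (by omega : 1 ≤ b))
  exact le_add_of_nonneg_right (mul_nonneg (inv_nonneg.2 (pow_nonneg hb n)) halt)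

/-- If `u = m - k + 2L - 1` for some positive integer `L`, with `b ≥ max(u,2)`,
then the gain coefficient `Γ(u,k)` is at least `1`. -/
theorem gainCoeff_ge_one_of_odd_gap
    (b m k u L : ℕ) (hb2 : 2 ≤ b) (hbu : u ≤ b) (hu : 1 ≤ u) (hk : k ≤ m)
    (hL : 1 ≤ L) (huL : (u : ℤ) = (m : ℤ) - k + 2 * L - 1) :
    1 ≤ gainCoeff b m k u :=
  gainCoeff_ge_one_of_odd_gap_general b m k u L hb2 hbu hu hL huL
end

section
/- Define Γ(u,k) = 1 + (1-b)^{-u}[(-b)^{m-k}·C(u-1, m-k) - Σ_{j=0}^{m-k} C(u,j)(-b)^j]. If b ≥ 2, b ≥ u+2, and u = m - k + 2L for some positive integer L, then Γ(u,k) ≤ Γ(u+2,k). -/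
open Finset

theorem Nat.succ_choose_le_succ_mul_choose {v s : ℕ} (hs : s ≤ v) :
    (v + 1).choose s ≤ (v + 1) * v.choose s := by
  have h := Nat.choose_mul_succ_eq v s
  calc (v + 1).choose s ≤ (v + 1).choose s * (v + 1 - s) :=
        Nat.le_mul_of_pos_right _ (by omega)
    _ = (v + 1) * v.choose s := by rw [← h, mul_comm]

theorem Nat.choose_add_two_add_mul_choose_le {v c n : ℕ} (hn : n ≤ v + 1) (hc : v + 1 ≤ c) :
    (v + 2).choose n + c * v.choose n ≤ (c + 1) * (v + 1).choose n := by
  cases n with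
  | zero => simp [add_comm]
  | succ s =>
    have h : (v + 1).choose s ≤ c * v.choose s :=
      (Nat.succ_choose_le_succ_mul_choose (by omega)).trans (Nat.mul_le_mul_right _ hc)
    rw [Nat.choose_succ_succ' (v + 1), Nat.choose_succ_succ' v]
    linarith

theorem choose_succ_sub_mul_choose_sub_mul_choose_pred_nonpos {b u n : ℕ} (hu : 1 ≤ u)
    (hn : n ≤ u) (hb : u + 1 ≤ b) :
    ((u + 1).choose n : ℝ) - b * u.choose n - (1 - b) * (u - 1).choose n ≤ 0 := by
  obtain ⟨v, rfl⟩ : ∃ v, u = v + 1 := ⟨u - 1, by omega⟩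
  obtain ⟨c, rfl⟩ : ∃ c, b = c + 1 := ⟨b - 1, by omega⟩
  have h : ((v + 2).choose n + c * v.choose n : ℝ) ≤ (c + 1) * (v + 1).choose n := by
    exact_mod_cast Nat.choose_add_two_add_mul_choose_le hn (by omega)
  simp only [Nat.add_sub_cancel]
  push_cast
  linarith

theorem sum_range_succ_choose_mul_pow {R : Type*} [CommRing R] (x : R) (u n : ℕ) :
    ∑ j ∈ range (n + 1), ((u + 1).choose j : R) * x ^ j
      = (1 + x) * ∑ j ∈ range (n + 1), (u.choose j : R) * x ^ j - u.choose n * x ^ (n + 1) := by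
  induction n with
  | zero => simp
  | succ n ih =>
    rw [sum_range_succ (fun j => ((u + 1).choose j : R) * x ^ j), ih,
      sum_range_succ (fun j => (u.choose j : R) * x ^ j) (n + 1),
      Nat.choose_succ_succ']
    push_cast
    ring

theorem gainCoeff_add_two_sub_gainCoeff (b m k u : ℕ) (hb : b ≠ 1) :
    gainCoeff b m k (u + 2) - gainCoeff b m k u
      = ((1 - (b : ℝ))⁻¹) ^ (u + 1) * (-(b : ℝ)) ^ (m - k) *
        (((u + 1).choose (m - k) : ℝ) - b * u.choose (m - k)
          - (1 - b) * (u - 1).choose (m - k)) := by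
  have hb' : (1 : ℝ) - b ≠ 0 := sub_ne_zero.2 (by exact_mod_cast hb.symm)
  unfold gainCoeff
  rw [show u + 2 - 1 = u + 1 by omega, show u + 2 = u + 1 + 1 from rfl,
    sum_range_succ_choose_mul_pow, sum_range_succ_choose_mul_pow]
  simp only [zpow_neg, zpow_natCast, inv_pow]
  field_simp
  ring

theorem neg_pow_mul_neg_pow_nonpos {R : Type*} [CommRing R] [LinearOrder R]
    [IsStrictOrderedRing R] {a c : R} (ha : 0 ≤ a) (hc : 0 ≤ c) {p q : ℕ}
    (hpq : Odd (p + q)) :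
    (-a) ^ p * (-c) ^ q ≤ 0 := by
  rw [neg_pow, neg_pow c, mul_mul_mul_comm, ← pow_add, hpq.neg_one_pow, neg_one_mul, neg_nonpos]
  positivity

theorem gainCoeff_mono_even_gap_general
    (b m k u L : ℕ) (hbu : u + 2 ≤ b)
    (hL : 1 ≤ L) (huL : u = m - k + 2 * L) :
    gainCoeff b m k u ≤ gainCoeff b m k (u + 2) := by
  have hb : (1 : ℝ) ≤ b := by exact_mod_cast (show 1 ≤ b by omega)
  have hsign : ((1 - (b : ℝ))⁻¹) ^ (u + 1) * (-(b : ℝ)) ^ (m - k) ≤ 0 := by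
    rw [← neg_sub, inv_neg]
    exact neg_pow_mul_neg_pow_nonpos (inv_nonneg.2 (by linarith)) (by positivity)
      ⟨m - k + L, by omega⟩
  have hkey : ((u + 1).choose (m - k) : ℝ) - b * u.choose (m - k)
      - (1 - b) * (u - 1).choose (m - k) ≤ 0 :=
    choose_succ_sub_mul_choose_sub_mul_choose_pred_nonpos (by omega) (by omega) (by omega)
  rw [← sub_nonneg, gainCoeff_add_two_sub_gainCoeff b m k u (by omega)]
  exact mul_nonneg_of_nonpos_of_nonpos hsign hkey

/-- If `u = m - k + 2L` for some positive integer `L`, with `b ≥ 2` and `b ≥ u + 2`,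
then `Γ(u,k) ≤ Γ(u+2,k)`. -/
theorem gainCoeff_mono_even_gap
    (b m k u L : ℕ) (hb2 : 2 ≤ b) (hbu : u + 2 ≤ b) (hk : k ≤ m)
    (hL : 1 ≤ L) (huL : u = m - k + 2 * L) :
    gainCoeff b m k u ≤ gainCoeff b m k (u + 2) :=
  gainCoeff_mono_even_gap_general b m k u L hbu hL huL
end

section
/- The unique bounded solution h_t of Stein's equation satisfies 0 ≤ h_t(w) ≤ 1 for all w ∈ ℝ and every t ∈ ℝ, where h_t(w) = Φ(w)(1-Φ(t))/φ(w) for w ≤ t and h_t(w) = Φ(t)(1-Φ(w))/φ(w) for w > t. -/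
open Real MeasureTheory

/-- Standard normal density. -/
noncomputable def normalPDF (w : ℝ) : ℝ := (Real.sqrt (2 * π))⁻¹ * Real.exp (-w ^ 2 / 2)

/-- Standard normal cumulative distribution function. -/
noncomputable def normalCDF (w : ℝ) : ℝ := ∫ s in Set.Iic w, normalPDF s

/-- Stein's solution `h_t`. -/
noncomputable def steinSolution (t w : ℝ) : ℝ :=
  if w ≤ t then normalCDF w * (1 - normalCDF t) / normalPDF w
  else normalCDF t * (1 - normalCDF w) / normalPDF w

/-!
For `w ≥ 0` the substitution `s = w + u` writes the Gaussian tail as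
`1 - Φ(w) = φ(w) ∫₀^∞ exp (-w u - u²/2) du`, and bounding the integrand by `exp (-w u)` or by
`exp (-u²/2)` gives the Mills-type bounds `1 - Φ(w) ≤ φ(w) / w` and `1 - Φ(w) ≤ exp (-w²/2) / 2`.
The first yields `Φ(w)(1 - Φ(w)) ≤ φ(w)` for `w ≥ 1`, the second for `0 ≤ w ≤ 1`, and the symmetry
`Φ(-w) = 1 - Φ(w)` covers `w < 0`. Since `Φ` is monotone, `h_t(w) ≤ Φ(w)(1 - Φ(w)) / φ(w) ≤ 1`.
-/

open ProbabilityTheory Set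

lemma normalPDF_eq_gaussianPDFReal : normalPDF = gaussianPDFReal 0 1 := by
  funext w
  simp [normalPDF, gaussianPDFReal]

lemma normalPDF_pos (w : ℝ) : 0 < normalPDF w := by
  rw [normalPDF_eq_gaussianPDFReal]
  exact gaussianPDFReal_pos 0 1 w one_ne_zero

lemma normalPDF_neg (w : ℝ) : normalPDF (-w) = normalPDF w := by
  simp [normalPDF]

lemma normalPDF_mul_sqrt_two_mul_pi (w : ℝ) :
    normalPDF w * √(2 * π) = exp (-w ^ 2 / 2) := by
  have : √(2 * π) ≠ 0 := by positivity
  rw [normalPDF, mul_comm, ← mul_assoc, mul_inv_cancel₀ this, one_mul]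

lemma integrable_normalPDF : Integrable normalPDF := by
  rw [normalPDF_eq_gaussianPDFReal]
  exact integrable_gaussianPDFReal 0 1

lemma integral_normalPDF : ∫ s, normalPDF s = 1 := by
  rw [normalPDF_eq_gaussianPDFReal]
  exact integral_gaussianPDFReal_eq_one 0 one_ne_zero

lemma normalCDF_nonneg (w : ℝ) : 0 ≤ normalCDF w :=
  setIntegral_nonneg measurableSet_Iic fun s _ => (normalPDF_pos s).le

lemma one_sub_normalCDF_eq_integral_Ioi (w : ℝ) :
    1 - normalCDF w = ∫ s in Ioi w, normalPDF s := by
  rw [← integral_normalPDF, ← integral_add_compl measurableSet_Iic integrable_normalPDF,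
    compl_Iic, normalCDF, add_sub_cancel_left]

lemma normalCDF_le_one (w : ℝ) : normalCDF w ≤ 1 := by
  rw [← sub_nonneg, one_sub_normalCDF_eq_integral_Ioi]
  exact setIntegral_nonneg measurableSet_Ioi fun s _ => (normalPDF_pos s).le

lemma normalCDF_mono : Monotone normalCDF := fun _ _ hab =>
  setIntegral_mono_set integrable_normalPDF.integrableOn
    (ae_of_all _ fun s => (normalPDF_pos s).le) (Iic_subset_Iic.2 hab).eventuallyLE

lemma normalCDF_neg (w : ℝ) : normalCDF (-w) = 1 - normalCDF w :=
  calc normalCDF (-w) = ∫ s in Iic (-w), normalPDF (-s) := by simp only [normalCDF, normalPDF_neg]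
    _ = 1 - normalCDF w := by
      rw [integral_comp_neg_Iic, neg_neg, one_sub_normalCDF_eq_integral_Ioi]

lemma one_sub_normalCDF_eq_mul_integral (w : ℝ) :
    1 - normalCDF w = normalPDF w * ∫ u in Ioi 0, exp (-(w * u) - u ^ 2 / 2) := by
  have hshift := (measurePreserving_add_right volume w).setIntegral_preimage_emb
    (Homeomorph.addRight w).isClosedEmbedding.measurableEmbedding normalPDF (Ioi w)
  have hpre : (· + w) ⁻¹' Ioi w = Ioi (0 : ℝ) := by ext u; simp
  rw [one_sub_normalCDF_eq_integral_Ioi, ← hshift, hpre, ← integral_const_mul]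
  refine setIntegral_congr_fun measurableSet_Ioi fun u _ => ?_
  rw [normalPDF, normalPDF, mul_assoc, ← exp_add]
  ring_nf

lemma integral_exp_neg_mul_sub_sq_le_inv {w : ℝ} (hw : 0 < w) :
    ∫ u in Ioi 0, exp (-(w * u) - u ^ 2 / 2) ≤ w⁻¹ := by
  have hexp : ∫ u in Ioi (0 : ℝ), exp (-w * u) = w⁻¹ := by
    rw [integral_exp_mul_Ioi (neg_lt_zero.2 hw)]
    simp
  rw [← hexp]
  refine integral_mono_of_nonneg (ae_of_all _ fun u => (exp_pos _).le)
    (integrableOn_exp_mul_Ioi (neg_lt_zero.2 hw) 0) (ae_of_all _ fun u => ?_)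
  exact exp_le_exp.2 (by nlinarith [sq_nonneg u])

lemma integral_exp_neg_mul_sub_sq_le {w : ℝ} (hw : 0 ≤ w) :
    ∫ u in Ioi 0, exp (-(w * u) - u ^ 2 / 2) ≤ √(2 * π) / 2 := by
  have hgauss : ∫ u in Ioi (0 : ℝ), exp (-(1 / 2) * u ^ 2) = √(2 * π) / 2 := by
    rw [integral_gaussian_Ioi]
    norm_num [mul_comm]
  rw [← hgauss]
  refine integral_mono_of_nonneg (ae_of_all _ fun u => (exp_pos _).le)
    (integrable_exp_neg_mul_sq (by norm_num)).integrableOn ?_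
  filter_upwards [ae_restrict_mem measurableSet_Ioi] with u (hu : 0 < u)
  exact exp_le_exp.2 (by nlinarith)

lemma one_sub_normalCDF_le_div {w : ℝ} (hw : 0 < w) :
    1 - normalCDF w ≤ normalPDF w / w := by
  rw [one_sub_normalCDF_eq_mul_integral, div_eq_mul_inv]
  exact mul_le_mul_of_nonneg_left (integral_exp_neg_mul_sub_sq_le_inv hw) (normalPDF_pos w).le

lemma one_sub_normalCDF_le_exp {w : ℝ} (hw : 0 ≤ w) :
    1 - normalCDF w ≤ exp (-w ^ 2 / 2) / 2 := by
  rw [one_sub_normalCDF_eq_mul_integral, ← normalPDF_mul_sqrt_two_mul_pi, mul_div_assoc]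
  exact mul_le_mul_of_nonneg_left (integral_exp_neg_mul_sub_sq_le hw) (normalPDF_pos w).le

lemma normalCDF_mul_one_sub_le_normalPDF_of_nonneg {w : ℝ} (hw : 0 ≤ w) :
    normalCDF w * (1 - normalCDF w) ≤ normalPDF w := by
  have hΦ₀ := normalCDF_nonneg w
  have hΦ₁ := normalCDF_le_one w
  rcases le_or_gt 1 w with hw₁ | hw₁
  · have hφ := normalPDF_pos w
    have : normalPDF w / w ≤ normalPDF w := div_le_self hφ.le hw₁
    nlinarith [one_sub_normalCDF_le_div (zero_lt_one.trans_le hw₁)]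
  · -- `T ↦ T (1 - T)` is increasing up to `1/2`, so with `T = 1 - Φ(w) ≤ a := exp (-w²/2) / 2`
    -- it suffices that `a (1 - a) ≤ φ(w) = 2a / √(2π)`, which holds as `a ≥ 1/4` and `√(2π) ≤ 8/3`.
    set a := exp (-w ^ 2 / 2) / 2 with ha
    have hT : 1 - normalCDF w ≤ a := one_sub_normalCDF_le_exp hw
    have ha_le : a ≤ 1 / 2 := by
      have : exp (-w ^ 2 / 2) ≤ 1 := exp_le_one_iff.2 (by nlinarith)
      linarith
    have ha_ge : 1 / 4 ≤ a := by
      have : 1 / 2 ≤ exp (-w ^ 2 / 2) := by nlinarith [add_one_le_exp (-w ^ 2 / 2)]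
      linarith
    have hs_pos : 0 < √(2 * π) := by positivity
    have hs_le : √(2 * π) ≤ 8 / 3 := by
      rw [sqrt_le_left (by norm_num)]
      nlinarith [pi_lt_d2]
    have hφ : normalPDF w * √(2 * π) = 2 * a := by
      rw [normalPDF_mul_sqrt_two_mul_pi, ha]; ring
    have hmono : normalCDF w * (1 - normalCDF w) ≤ (1 - a) * a := by nlinarith
    have hpeak : (1 - a) * a ≤ normalPDF w := by
      refine le_of_mul_le_mul_right ?_ hs_pos
      have : (1 - a) * √(2 * π) ≤ 2 := by nlinarith
      rw [hφ]
      nlinarith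
    exact hmono.trans hpeak

lemma normalCDF_mul_one_sub_le_normalPDF (w : ℝ) :
    normalCDF w * (1 - normalCDF w) ≤ normalPDF w := by
  rcases le_or_gt 0 w with hw | hw
  · exact normalCDF_mul_one_sub_le_normalPDF_of_nonneg hw
  · have := normalCDF_mul_one_sub_le_normalPDF_of_nonneg (neg_nonneg.2 hw.le)
    rw [normalCDF_neg, normalPDF_neg] at this
    linarith

lemma steinSolution_nonneg (t w : ℝ) : 0 ≤ steinSolution t w := by
  have hφ := (normalPDF_pos w).le
  unfold steinSolution
  split_ifs
  · exact div_nonneg (mul_nonneg (normalCDF_nonneg w) (sub_nonneg.2 (normalCDF_le_one t))) hφ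
  · exact div_nonneg (mul_nonneg (normalCDF_nonneg t) (sub_nonneg.2 (normalCDF_le_one w))) hφ

lemma steinSolution_le (t w : ℝ) :
    steinSolution t w ≤ normalCDF w * (1 - normalCDF w) / normalPDF w := by
  have hφ := (normalPDF_pos w).le
  unfold steinSolution
  split_ifs with h
  · refine div_le_div_of_nonneg_right (mul_le_mul_of_nonneg_left ?_ (normalCDF_nonneg w)) hφ
    linarith [normalCDF_mono h]
  · refine div_le_div_of_nonneg_right
      (mul_le_mul_of_nonneg_right ?_ (sub_nonneg.2 (normalCDF_le_one w))) hφ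
    exact normalCDF_mono (not_le.1 h).le

/-- The bounded solution of Stein's equation satisfies `0 ≤ h_t(w) ≤ 1`. -/
theorem steinSolution_bounds (t w : ℝ) :
    0 ≤ steinSolution t w ∧ steinSolution t w ≤ 1 :=
  ⟨steinSolution_nonneg t w, (steinSolution_le t w).trans <|
    (div_le_one (normalPDF_pos w)).2 (normalCDF_mul_one_sub_le_normalPDF w)⟩
end

section
/- Let f(u,k) = Γ(m-k+2,k) evaluated via the closed form: Γ(m-k+2,k) = (b/(b-1))^{m-k}·(1 - (m-k)/(b-1)), i.e., substituting u = m-k+2 into Γ(u,k) = 1 + (1-b)^{-u}[(-b)^{m-k}C(u-1,m-k) - Σ_{j=0}^{m-k}C(u,j)(-b)^j] yields (b/(b-1))^{m-k}(1 - (m-k)/(b-1)). -/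
open Finset

/-! With `y = -b`, the binomial sum is `(1 + y)^(m-k+2)` minus its top two terms, so the bracket
becomes `(-b)^(m-k) (1 - b)(m-k+1-b) - (1 - b)^(m-k+2)`; dividing by `(1 - b)^(m-k+2)`, the `-1`
cancels the leading `1` and what is left is `(-b/(1-b))^(m-k) (m-k+1-b)/(1-b)`. -/

theorem sum_range_choose_mul_pow_add_two {R : Type*} [CommRing R] (y : R) (n : ℕ) :
    ∑ j ∈ range (n + 1), ((n + 2).choose j : R) * y ^ j
      = (1 + y) ^ (n + 2) - (n + 2) * y ^ (n + 1) - y ^ (n + 2) := by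
  have binomial : (1 + y) ^ (n + 2) = ∑ j ∈ range (n + 3), ((n + 2).choose j : R) * y ^ j := by
    rw [add_comm, add_pow]
    simp only [one_pow, mul_one, mul_comm]
  rw [binomial, sum_range_succ _ (n + 2), sum_range_succ _ (n + 1),
    Nat.choose_succ_self_right, Nat.choose_self]
  push_cast
  ring

theorem one_add_inv_one_sub_pow_mul_eq {K : Type*} [Field K] {b : K} (hb : b ≠ 1) (n : ℕ) :
    1 + ((1 - b) ^ (n + 2))⁻¹ *
        ((-b) ^ n * (n + 1) - ∑ j ∈ range (n + 1), ((n + 2).choose j : K) * (-b) ^ j)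
      = (b / (b - 1)) ^ n * (1 - n / (b - 1)) := by
  have h1b : 1 - b ≠ 0 := sub_ne_zero.mpr hb.symm
  have hb1 : b - 1 ≠ 0 := sub_ne_zero.mpr hb
  rw [sum_range_choose_mul_pow_add_two, ← neg_div_neg_eq b, neg_sub, div_pow]
  field_simp
  ring

theorem gainCoeff_closed_form_general (b m k : ℕ) (hb : 2 ≤ b) :
    1 + ((1 : ℝ) - b) ^ (-((m - k + 2 : ℕ) : ℤ)) *
        ((-(b : ℝ)) ^ (m - k) * ((m - k + 1).choose (m - k) : ℝ)
          - ∑ j ∈ range (m - k + 1), (((m - k + 2).choose j : ℝ) * (-(b : ℝ)) ^ j))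
      = ((b : ℝ) / ((b : ℝ) - 1)) ^ (m - k) * (1 - ((m - k : ℕ) : ℝ) / ((b : ℝ) - 1)) := by
  have hb1 : (b : ℝ) ≠ 1 := by exact_mod_cast (by omega : b ≠ 1)
  rw [zpow_neg, zpow_natCast, Nat.choose_succ_self_right, Nat.cast_succ]
  exact one_add_inv_one_sub_pow_mul_eq hb1 (m - k)

/-- Closed form for the gain coefficient at `u = m - k + 2`:
`1 + (1-b)^{-(m-k+2)} [(-b)^{m-k} C(m-k+1, m-k) - Σ_{j=0}^{m-k} C(m-k+2, j)(-b)^j]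
  = (b/(b-1))^{m-k} (1 - (m-k)/(b-1))`. -/
theorem gainCoeff_closed_form (b m k : ℕ) (hb : 2 ≤ b) (hk : k ≤ m) :
    1 + ((1 : ℝ) - b) ^ (-((m - k + 2 : ℕ) : ℤ)) *
        ((-(b : ℝ)) ^ (m - k) * ((m - k + 1).choose (m - k) : ℝ)
          - ∑ j ∈ range (m - k + 1), (((m - k + 2).choose j : ℝ) * (-(b : ℝ)) ^ j))
      = ((b : ℝ) / ((b : ℝ) - 1)) ^ (m - k) * (1 - ((m - k : ℕ) : ℝ) / ((b : ℝ) - 1)) :=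
  gainCoeff_closed_form_general b m k hb
end

section
/- For positive integers u and nonnegative integers m with m ≥ u, and real b > 1: Σ_{r=m-u+1}^{∞} b^{-2r/d}·C(r - a·u + u - 1, u - 1) ≥ (b^{-2(m-u)/d}/(u-1)!)·(m - a·u - u + 1)^{u-1}·Σ_{l=1}^{∞} b^{-2l/d}, whenever m - a·u - u + 1 ≥ 1, where d ≥ 1 is an integer and a ≥ 0 an integer. -/
/-!
With `q = b ^ (-2 / d) ∈ (0, 1)` we have `b ^ (-2x / d) = q ^ x`, and the inequality holds termwise:
for `r = m - u + 1 + l` we have `q ^ (m - u) * q ^ (l + 1) = q ^ r`, and the upper entry `n` of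
`C(r - au + u - 1, u - 1)` satisfies `n + 1 - (u - 1) ≥ m - au - u + 1`, so the bound
`C(n, k) ≥ (n + 1 - k) ^ k / k!` applies. The right-hand series converges because its terms are
dominated by those of `∑ C(r + u - 1, u - 1) q ^ r`.
-/

open Real

lemma Nat.pow_div_factorial_le_choose_of_add_le {N n k : ℕ} (h : N + k ≤ n + 1) :
    (N : ℝ) ^ k / k.factorial ≤ n.choose k :=
  calc (N : ℝ) ^ k / k.factorial ≤ ((n + 1 - k : ℕ) : ℝ) ^ k / k.factorial := by
        gcongr; exact_mod_cast (by omega : N ≤ n + 1 - k)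
    _ ≤ n.choose k := Nat.pow_le_choose k n

lemma summable_pow_mul_choose_of_le {q : ℝ} (hq₀ : 0 ≤ q) (hq₁ : q < 1) {f : ℕ → ℕ} {k : ℕ}
    (hf : ∀ r, f r ≤ r + k) : Summable fun r ↦ q ^ r * ((f r).choose k : ℝ) := by
  refine (summable_choose_mul_geometric_of_norm_lt_one k (r := q)
    (by rwa [norm_of_nonneg hq₀])).of_nonneg_of_le (fun r ↦ by positivity) fun r ↦ ?_
  rw [mul_comm]
  gcongr
  exact hf r

lemma mul_tsum_geometric_le_tsum_pow_mul_choose {q : ℝ} (hq₀ : 0 ≤ q) (hq₁ : q < 1)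
    {s k N : ℕ} {f : ℕ → ℕ} (hf_le : ∀ r, f r ≤ r + k) (hf_ge : ∀ l, N + k ≤ f (s + 1 + l) + 1) :
    q ^ s / k.factorial * (N : ℝ) ^ k * ∑' l : ℕ, q ^ (l + 1)
      ≤ ∑' l : ℕ, q ^ (s + 1 + l) * ((f (s + 1 + l)).choose k : ℝ) := by
  have hgeom : Summable fun l : ℕ ↦ q ^ (l + 1) :=
    (summable_nat_add_iff 1).mpr (summable_geometric_of_lt_one hq₀ hq₁)
  have hchoose : Summable fun l ↦ q ^ (s + 1 + l) * ((f (s + 1 + l)).choose k : ℝ) := by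
    simpa only [add_comm _ (s + 1)] using
      (summable_nat_add_iff (s + 1)).mpr (summable_pow_mul_choose_of_le hq₀ hq₁ hf_le)
  rw [← tsum_mul_left]
  refine (hgeom.mul_left _).tsum_le_tsum (fun l ↦ ?_) hchoose
  calc q ^ s / k.factorial * (N : ℝ) ^ k * q ^ (l + 1)
      = q ^ (s + 1 + l) * ((N : ℝ) ^ k / k.factorial) := by ring
    _ ≤ q ^ (s + 1 + l) * ((f (s + 1 + l)).choose k : ℝ) := by
        gcongr; exact Nat.pow_div_factorial_le_choose_of_add_le (hf_ge l)

lemma Real.rpow_neg_two_mul_div {b : ℝ} (hb : 0 ≤ b) (d x : ℝ) :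
    b ^ (-(2 * x) / d) = (b ^ (-2 / d)) ^ x := by
  rw [← rpow_mul hb]; ring_nf

theorem binomial_tail_sum_lower_bound_general
    (d u a m : ℕ) (hd : 1 ≤ d)
    (b : ℝ) (hb : 1 < b)
    (hfeas : (1 : ℤ) ≤ (m : ℤ) - a * u - u + 1) :
    (b ^ (-(2 * ((m : ℝ) - u)) / d) / ((u - 1).factorial : ℝ))
        * ((m : ℝ) - a * u - u + 1) ^ (u - 1)
        * ∑' l : ℕ, b ^ (-(2 * ((l : ℝ) + 1)) / d)
      ≤ ∑' l : ℕ,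
          b ^ (-(2 * ((m - u + 1 + l : ℕ) : ℝ)) / d)
            * (((m - u + 1 + l) - a * u + u - 1).choose (u - 1) : ℝ) := by
  have hau : a * u + u ≤ m := by zify; linarith
  have hq₁ : b ^ (-2 / d : ℝ) < 1 :=
    rpow_lt_one_of_one_lt_of_neg hb (div_neg_of_neg_of_pos (by norm_num) (by exact_mod_cast hd))
  have hN : (m : ℝ) - a * u - u + 1 = ((m - a * u - u + 1 : ℕ) : ℝ) := by
    rw [Nat.cast_add, Nat.cast_sub (by omega), Nat.cast_sub (by omega)]; push_cast; ring
  have hmu : (m : ℝ) - u = ((m - u : ℕ) : ℝ) := (Nat.cast_sub (by omega)).symm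
  simp only [rpow_neg_two_mul_div (zero_le_one.trans hb.le), ← Nat.cast_succ, hmu, hN,
    rpow_natCast]
  exact mul_tsum_geometric_le_tsum_pow_mul_choose (f := fun r ↦ r - a * u + u - 1) (by positivity)
    hq₁ (fun r ↦ by omega) fun l ↦ by omega

/-- Tail sum lower bound:
`Σ_{r=m-u+1}^{∞} b^{-2r/d} C(r - au + u - 1, u-1)
  ≥ (b^{-2(m-u)/d}/(u-1)!) (m - au - u + 1)^{u-1} Σ_{l=1}^{∞} b^{-2l/d}`. -/
theorem binomial_tail_sum_lower_bound
    (d u a m : ℕ) (hd : 1 ≤ d) (hu : 1 ≤ u) (hum : u ≤ m)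
    (b : ℝ) (hb : 1 < b)
    (hfeas : (1 : ℤ) ≤ (m : ℤ) - a * u - u + 1) :
    (b ^ (-(2 * ((m : ℝ) - u)) / d) / ((u - 1).factorial : ℝ))
        * ((m : ℝ) - a * u - u + 1) ^ (u - 1)
        * ∑' l : ℕ, b ^ (-(2 * ((l : ℝ) + 1)) / d)
      ≤ ∑' l : ℕ,
          b ^ (-(2 * ((m - u + 1 + l : ℕ) : ℝ)) / d)
            * (((m - u + 1 + l) - a * u + u - 1).choose (u - 1) : ℝ) :=
  binomial_tail_sum_lower_bound_general d u a m hd b hb hfeas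
end
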